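/- Let n ≥ 1 and let L, U : Matrix (Fin n) (Fin n) ℝ be symmetric matrices with L i j ≤ U i j for all i, j. For a sign vector z : Fin n → ℝ with z i ∈ {-1, 1} for all i, define the vertex matrix U^z by (U^z) i j = U i j if i = j or z i * z j = 1, and (U^z) i j = L i j otherwise. Then for every symmetric matrix H : Matrix (Fin n) (Fin n) ℝ with L i j ≤ H i j ≤ U i j for all i, j, every eigenvalue λ of H satisfies λ ≤ max over all sign vectors z of λ_max(U^z), where λ_max denotes the largest eigenvalue of a real symmetric matrix. -/

import Mathlib

/-- The set of (real) eigenvalues of a real matrix. -/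
def realSpec {n : ℕ} (A : Matrix (Fin n) (Fin n) ℝ) : Set ℝ :=
  {μ | ∃ v : Fin n → ℝ, v ≠ 0 ∧ A.mulVec v = μ • v}

/-- The largest eigenvalue of a (symmetric) real matrix. -/
noncomputable def lamMax {n : ℕ} (A : Matrix (Fin n) (Fin n) ℝ) : ℝ := sSup (realSpec A)

/-- The Hertz–Rohn vertex matrix `U^z` for a sign vector `z`. -/
noncomputable def vertexU {n : ℕ} (L U : Matrix (Fin n) (Fin n) ℝ) (z : Fin n → ℝ) :
    Matrix (Fin n) (Fin n) ℝ :=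
  Matrix.of fun i j => if i = j ∨ z i * z j = 1 then U i j else L i j

/-!
Let `H v = λ v` with `v ≠ 0` and let `z` be the sign pattern of `v`. Entrywise, `H i j v_i v_j`
is at most `U i j v_i v_j` when `v_i v_j ≥ 0` and at most `L i j v_i v_j` when `v_i v_j ≤ 0`,
and `U^z` picks exactly that bound. Hence `λ ‖v‖² = vᵀ H v ≤ vᵀ U^z v ≤ λ_max(U^z) ‖v‖²`, the last
step because `U^z ≤ λ_max(U^z) • 1` in the Loewner order.
-/

open Matrix

section Spectrum

variable {n : ℕ}

lemma realSpec_eq_spectrum (A : Matrix (Fin n) (Fin n) ℝ) : realSpec A = spectrum ℝ A := by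
  ext μ
  rw [spectrum.mem_iff, isUnit_iff_isUnit_det, isUnit_iff_ne_zero, not_not,
    ← exists_mulVec_eq_zero_iff]
  simp only [realSpec, Set.mem_ofPred_eq, Algebra.algebraMap_eq_smul_one, sub_mulVec,
    smul_mulVec, one_mulVec, sub_eq_zero, eq_comm]

lemma le_lamMax {A : Matrix (Fin n) (Fin n) ℝ} {μ : ℝ} (hμ : μ ∈ spectrum ℝ A) :
    μ ≤ lamMax A := by
  rw [← realSpec_eq_spectrum] at hμ
  exact le_csSup (realSpec_eq_spectrum A ▸ finite_real_spectrum.bddAbove) hμ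

open scoped MatrixOrder in
lemma dotProduct_mulVec_le_lamMax_mul {A : Matrix (Fin n) (Fin n) ℝ} (hA : A.IsSymm)
    (v : Fin n → ℝ) : v ⬝ᵥ A *ᵥ v ≤ lamMax A * (v ⬝ᵥ v) := by
  have hA' : IsSelfAdjoint A := hA
  have hle : A ≤ algebraMap ℝ _ (lamMax A) := le_algebraMap_of_spectrum_le fun _ => le_lamMax
  simpa [Algebra.algebraMap_eq_smul_one, sub_mulVec, smul_mulVec, dotProduct_sub, smul_eq_mul]
    using (le_iff.mp hle).dotProduct_mulVec_nonneg v

end Spectrum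

lemma dotProduct_mulVec_le_dotProduct_mulVec {ι R : Type*} [Fintype ι] [CommRing R]
    [PartialOrder R] [IsOrderedAddMonoid R] {A B : Matrix ι ι R} {v : ι → R}
    (h : ∀ i j, A i j * (v i * v j) ≤ B i j * (v i * v j)) :
    v ⬝ᵥ A *ᵥ v ≤ v ⬝ᵥ B *ᵥ v := by
  have hsum (M : Matrix ι ι R) : v ⬝ᵥ M *ᵥ v = ∑ i, ∑ j, M i j * (v i * v j) := by
    simp only [dotProduct, mulVec, Finset.mul_sum]
    exact Fintype.sum_congr _ _ fun i => Fintype.sum_congr _ _ fun j => by ring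
  rw [hsum, hsum]
  gcongr with i _ j _
  exact h i j

section Vertex

variable {n : ℕ}

noncomputable def signVec (v : Fin n → ℝ) : Fin n → ℝ := fun i => if 0 ≤ v i then 1 else -1

lemma signVec_eq_neg_one_or_eq_one (v : Fin n → ℝ) (i : Fin n) :
    signVec v i = -1 ∨ signVec v i = 1 := by
  unfold signVec
  split_ifs <;> simp

lemma mul_nonneg_of_signVec_mul_eq_one {v : Fin n → ℝ} {i j : Fin n}
    (h : signVec v i * signVec v j = 1) : 0 ≤ v i * v j := by
  unfold signVec at h
  split_ifs at h <;> nlinarith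

lemma mul_nonpos_of_signVec_mul_ne_one {v : Fin n → ℝ} {i j : Fin n}
    (h : signVec v i * signVec v j ≠ 1) : v i * v j ≤ 0 := by
  unfold signVec at h
  split_ifs at h <;> norm_num at h <;> nlinarith

lemma vertexU_isSymm {L U : Matrix (Fin n) (Fin n) ℝ} (hL : L.IsSymm) (hU : U.IsSymm)
    (z : Fin n → ℝ) : (vertexU L U z).IsSymm := by
  ext i j
  simp only [transpose_apply, vertexU, of_apply, eq_comm (a := j), mul_comm (z j)]
  split_ifs
  exacts [hU.apply i j, hL.apply i j]

lemma mul_le_vertexU_signVec_mul {L U H : Matrix (Fin n) (Fin n) ℝ}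
    (hHL : ∀ i j, L i j ≤ H i j) (hHU : ∀ i j, H i j ≤ U i j) (v : Fin n → ℝ) (i j : Fin n) :
    H i j * (v i * v j) ≤ vertexU L U (signVec v) i j * (v i * v j) := by
  by_cases h : i = j ∨ signVec v i * signVec v j = 1
  · have hv : 0 ≤ v i * v j :=
      h.elim (fun hij => hij ▸ mul_self_nonneg _) mul_nonneg_of_signVec_mul_eq_one
    rw [vertexU, of_apply, if_pos h]
    exact mul_le_mul_of_nonneg_right (hHU i j) hv
  · rw [not_or] at h
    rw [vertexU, of_apply, if_neg (not_or.mpr h)]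
    exact mul_le_mul_of_nonpos_right (hHL i j) (mul_nonpos_of_signVec_mul_ne_one h.2)

lemma bddAbove_lamMax_vertexU (L U : Matrix (Fin n) (Fin n) ℝ) :
    BddAbove {m : ℝ | ∃ z : Fin n → ℝ, (∀ i, z i = -1 ∨ z i = 1) ∧
      m = lamMax (vertexU L U z)} := by
  have hfin : {z : Fin n → ℝ | ∀ i, z i = -1 ∨ z i = 1}.Finite :=
    (Set.Finite.pi fun _ => Set.toFinite {-1, 1}).subset fun z hz i _ => hz i
  refine (hfin.image fun z => lamMax (vertexU L U z)).bddAbove.mono ?_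
  rintro _ ⟨z, hz, rfl⟩
  exact ⟨z, hz, rfl⟩

end Vertex

theorem hertz_rohn_upper_valid_general
    (n : ℕ)
    (L U : Matrix (Fin n) (Fin n) ℝ)
    (hLsymm : L.IsSymm) (hUsymm : U.IsSymm)
    (H : Matrix (Fin n) (Fin n) ℝ)
    (hHL : ∀ i j, L i j ≤ H i j) (hHU : ∀ i j, H i j ≤ U i j)
    (lam : ℝ) (hlam : lam ∈ realSpec H) :
    lam ≤ sSup {m : ℝ | ∃ z : Fin n → ℝ, (∀ i, z i = -1 ∨ z i = 1) ∧
      m = lamMax (vertexU L U z)} := by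
  obtain ⟨v, hv0, hHv⟩ := hlam
  have hquad : lam * (v ⬝ᵥ v) ≤ lamMax (vertexU L U (signVec v)) * (v ⬝ᵥ v) :=
    calc lam * (v ⬝ᵥ v) = v ⬝ᵥ H *ᵥ v := by rw [hHv, dotProduct_smul, smul_eq_mul]
      _ ≤ v ⬝ᵥ vertexU L U (signVec v) *ᵥ v :=
        dotProduct_mulVec_le_dotProduct_mulVec (mul_le_vertexU_signVec_mul hHL hHU v)
      _ ≤ _ := dotProduct_mulVec_le_lamMax_mul (vertexU_isSymm hLsymm hUsymm _) v
  have hv : 0 < v ⬝ᵥ v := by simpa using dotProduct_star_self_pos_iff.mpr hv0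
  exact (le_of_mul_le_mul_right hquad hv).trans
    (le_csSup (bddAbove_lamMax_vertexU L U) ⟨signVec v, signVec_eq_neg_one_or_eq_one v, rfl⟩)

/-- Hertz and Rohn's method: validity of the upper eigenvalue bound. -/
theorem hertz_rohn_upper_valid
    (n : ℕ) (hn : 0 < n)
    (L U : Matrix (Fin n) (Fin n) ℝ)
    (hLsymm : L.IsSymm) (hUsymm : U.IsSymm)
    (hLU : ∀ i j, L i j ≤ U i j)
    (H : Matrix (Fin n) (Fin n) ℝ) (hHsymm : H.IsSymm)
    (hHL : ∀ i j, L i j ≤ H i j) (hHU : ∀ i j, H i j ≤ U i j)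
    (lam : ℝ) (hlam : lam ∈ realSpec H) :
    lam ≤ sSup {m : ℝ | ∃ z : Fin n → ℝ, (∀ i, z i = -1 ∨ z i = 1) ∧
      m = lamMax (vertexU L U z)} :=
  hertz_rohn_upper_valid_general n L U hLsymm hUsymm H hHL hHU lam hlam
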